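/- Define M : ℕ → ℕ by M(1) = 1 and M(n) = max_{1 ≤ p ≤ n-1} n·M(p)·M(n-p) for n ≥ 2. Then M(n) = n! for all n ≥ 1. -/
import Mathlib


/-- `M(1) = 1` and `M(n) = max_{1 ≤ p ≤ n-1} n·M(p)·M(n-p)` for `n ≥ 2`. -/
def M : ℕ → ℕ
  | 0 => 1
  | 1 => 1
  | n + 2 =>
    (Finset.Icc 1 (n + 1)).attach.sup'
      (Finset.attach_nonempty_iff.mpr (Finset.nonempty_Icc.mpr (by omega)))
      (fun p => (n + 2) * M p.1 * M (n + 2 - p.1))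
decreasing_by
  · have := p.2; simp only [Finset.mem_Icc] at this; omega
  · have := p.2; simp only [Finset.mem_Icc] at this; omega

lemma fact_mul_fact_le (a : ℕ) : ∀ b : ℕ, 1 ≤ a → 1 ≤ b →
    a.factorial * b.factorial ≤ (a + b - 1).factorial := by
  intro b
  induction b with
  | zero => omega
  | succ b ih =>
    intro ha hb
    rcases Nat.lt_or_ge 1 (b + 1) with h | h
    · have hb1 : 1 ≤ b := by omega
      have h1 := ih ha hb1
      calc a.factorial * (b + 1).factorial
          = (b + 1) * (a.factorial * b.factorial) := by
            rw [Nat.factorial_succ]; ring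
        _ ≤ (b + 1) * (a + b - 1).factorial := Nat.mul_le_mul_left _ h1
        _ ≤ (a + b) * (a + b - 1).factorial :=
            Nat.mul_le_mul_right _ (by omega)
        _ = (a + b).factorial := by
            have : a + b = (a + b - 1) + 1 := by omega
            rw [this, Nat.factorial_succ]; simp
        _ = (a + (b + 1) - 1).factorial := by
            congr 1
    · have : b = 0 := by omega
      subst this
      simp [Nat.factorial]

lemma M_eq (n : ℕ) : M n = n.factorial := by
  induction n using Nat.strong_induction_on with
  | _ n ih =>
    match n with
    | 0 => simp [M]
    | 1 => simp [M]
    | k + 2 =>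
      rw [M]
      apply le_antisymm
      · apply Finset.sup'_le
        intro p _
        have hp := p.2
        rw [Finset.mem_Icc] at hp
        rw [ih p.1 (by omega), ih (k + 2 - p.1) (by omega)]
        have h := fact_mul_fact_le p.1 (k + 2 - p.1) hp.1 (by omega)
        have heq : p.1 + (k + 2 - p.1) - 1 = k + 1 := by omega
        rw [heq] at h
        calc (k + 2) * p.1.factorial * (k + 2 - p.1).factorial
            = (k + 2) * (p.1.factorial * (k + 2 - p.1).factorial) := by ring
          _ ≤ (k + 2) * (k + 1).factorial := Nat.mul_le_mul_left _ h
          _ = (k + 2).factorial := (Nat.factorial_succ _).symm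
      · have hmem : (1 : ℕ) ∈ Finset.Icc 1 (k + 1) := by
          rw [Finset.mem_Icc]; omega
        have := Finset.le_sup'
          (fun p : {x // x ∈ Finset.Icc 1 (k + 1)} =>
            (k + 2) * M p.1 * M (k + 2 - p.1))
          (Finset.mem_attach _ ⟨1, hmem⟩)
        simp only at this
        have hM1 : M 1 = 1 := by simp [M]
        have hMk : M (k + 2 - 1) = (k + 1).factorial := by
          have : k + 2 - 1 = k + 1 := by omega
          rw [this, ih (k + 1) (by omega)]
        rw [hM1, hMk] at this
        calc (k + 2).factorial = (k + 2) * 1 * (k + 1).factorial := by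
              rw [Nat.factorial_succ]; ring
          _ ≤ _ := this

/-- `M(n) = n!` for all `n ≥ 1`. -/
theorem stmt_10 (n : ℕ) (hn : 1 ≤ n) : M n = Nat.factorial n := M_eq n
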